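/- arXiv:math/9910168 — 7 statements merged into one kernel-verified Lean document; each statement's English description precedes it below -/
import Mathlib

section
/- Let (f_n)_{n∈ℕ} be a frame for a separable complex Hilbert space H and fix an index m. Then either the sequence (f_n)_{n≠m} is again a frame for H, or (f_n)_{n≠m} is incomplete, i.e., the closure of its linear span is a proper subspace of H. -/
/-!
Let `T` be the analysis operator of `(f n)_{n ≠ m}` into `ℓ²` and `φ = ⟪f m, ·⟫`. The lower frame
bound says that `x ↦ (T x, φ x)` is bounded below. If `T` itself is not bounded below, there are
vectors `z k` with `φ (z k) = 1` and `T (z k) → 0`; their differences lie in `ker φ`, where `T`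
controls the norm, so they form a Cauchy sequence. Its limit `g` satisfies `φ g = 1` and
`T g = 0`, i.e. `g ≠ 0` is orthogonal to every `f n` with `n ≠ m`.
-/

noncomputable section

open Filter Topology

theorem Summable.tsum_eq_add_tsum_ne {ι α : Type*} [AddCommGroup α] [TopologicalSpace α]
    [IsTopologicalAddGroup α] [T2Space α] {f : ι → α} (hf : Summable f) (i : ι) :
    ∑' j, f j = f i + ∑' j : {j // j ≠ i}, f j := by
  classical
  rw [hf.tsum_eq_add_tsum_ite i]
  congr 1
  exact (tsum_congr fun j => by by_cases h : j = i <;> simp [h]).trans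
    (tsum_subtype {j | j ≠ i} f).symm

section lp

variable {α : Type*} {E : α → Type*} [∀ i, NormedAddCommGroup (E i)]

theorem memℓp_two_of_summable {f : ∀ i, E i} (hf : Summable fun i => ‖f i‖ ^ 2) : Memℓp f 2 :=
  (memℓp_gen_iff (by norm_num)).2 (by simpa using hf)

theorem lp.norm_sq_eq_tsum (f : lp E 2) : ‖f‖ ^ 2 = ∑' i, ‖f i‖ ^ 2 := by
  simpa using lp.norm_rpow_eq_tsum (p := 2) (by norm_num) f

end lp

namespace ContinuousLinearMap

variable {𝕜 E F : Type*} [NormedField 𝕜] [NormedAddCommGroup E] [NormedSpace 𝕜 E]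
  [NormedAddCommGroup F] [NormedSpace 𝕜 F]

theorem exists_seq_map_eq_one_tendsto_zero {T : E →L[𝕜] F} {φ : E →L[𝕜] 𝕜}
    (h : ∀ C : ℝ, ∃ x, C * ‖T x‖ < ‖φ x‖) :
    ∃ z : ℕ → E, (∀ k, φ (z k) = 1) ∧ Tendsto (fun k => T (z k)) atTop (𝓝 0) := by
  choose y hy using fun k : ℕ => h (k + 1)
  have hφy (k : ℕ) : φ (y k) ≠ 0 := fun h0 => by
    have := hy k
    rw [h0, norm_zero] at this
    exact this.not_ge (by positivity)
  refine ⟨fun k => (φ (y k))⁻¹ • y k, fun k => by simp [hφy k], ?_⟩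
  refine squeeze_zero_norm (fun k => ?_) tendsto_one_div_add_atTop_nhds_zero_nat
  rw [map_smul, norm_smul, norm_inv, inv_mul_le_iff₀ (norm_pos_iff.2 (hφy k)), mul_one_div,
    le_div_iff₀ (by positivity)]
  exact (hy k).le.trans_eq' (mul_comm _ _)

theorem exists_map_eq_zero_map_eq_one_of_tendsto [CompleteSpace E] {T : E →L[𝕜] F} {φ : E →L[𝕜] 𝕜}
    {c : ℝ} (hc : 0 < c) (h : ∀ x, c * ‖x‖ ≤ ‖T x‖ + ‖φ x‖) {z : ℕ → E}
    (hφz : ∀ k, φ (z k) = 1) (hTz : Tendsto (fun k => T (z k)) atTop (𝓝 0)) :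
    ∃ g, T g = 0 ∧ φ g = 1 := by
  have hz : CauchySeq z := by
    have hTz' := hTz.cauchySeq
    rw [Metric.cauchySeq_iff'] at hTz' ⊢
    intro ε hε
    obtain ⟨N, hN⟩ := hTz' (c * ε) (mul_pos hc hε)
    refine ⟨N, fun n hn => lt_of_mul_lt_mul_left ?_ hc.le⟩
    have := h (z n - z N)
    rw [map_sub, map_sub, hφz, hφz, sub_self, norm_zero, add_zero, ← dist_eq_norm,
      ← dist_eq_norm] at this
    exact this.trans_lt (hN n hn)
  obtain ⟨g, hg⟩ := cauchySeq_tendsto_of_complete hz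
  exact ⟨g, tendsto_nhds_unique ((T.continuous.tendsto g).comp hg) hTz,
    tendsto_nhds_unique ((φ.continuous.tendsto g).comp hg)
      (by simpa only [Function.comp_def, hφz] using tendsto_const_nhds)⟩

theorem exists_pos_mul_norm_le_or_exists_map_eq_zero_map_eq_one [CompleteSpace E] (T : E →L[𝕜] F)
    (φ : E →L[𝕜] 𝕜) {c : ℝ} (hc : 0 < c) (h : ∀ x, c * ‖x‖ ≤ ‖T x‖ + ‖φ x‖) :
    (∃ c' > 0, ∀ x, c' * ‖x‖ ≤ ‖T x‖) ∨ ∃ g, T g = 0 ∧ φ g = 1 := by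
  by_cases hdom : ∃ C : ℝ, ∀ x, ‖φ x‖ ≤ C * ‖T x‖
  · obtain ⟨C, hC⟩ := hdom
    refine .inl ⟨c / (1 + |C|), by positivity, fun x => ?_⟩
    rw [div_mul_eq_mul_div, div_le_iff₀ (by positivity)]
    nlinarith [h x, hC x, le_abs_self C, norm_nonneg (T x)]
  · push Not at hdom
    obtain ⟨z, hφz, hTz⟩ := exists_seq_map_eq_one_tendsto_zero hdom
    exact .inr (exists_map_eq_zero_map_eq_one_of_tendsto hc h hφz hTz)

end ContinuousLinearMap

section Analysis

variable {𝕜 E ι : Type*} [RCLike 𝕜] [NormedAddCommGroup E] [InnerProductSpace 𝕜 E]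

def analysisOperator (v : ι → E) (B : ℝ)
    (hv : ∀ x, Summable fun i => ‖(inner 𝕜 x (v i) : 𝕜)‖ ^ 2)
    (hB : ∀ x, ∑' i, ‖(inner 𝕜 x (v i) : 𝕜)‖ ^ 2 ≤ B * ‖x‖ ^ 2) :
    E →L[𝕜] lp (fun _ : ι => 𝕜) 2 :=
  LinearMap.mkContinuous
    { toFun := fun x => ⟨fun i => inner 𝕜 (v i) x,
        memℓp_two_of_summable (by simpa only [norm_inner_symm] using hv x)⟩
      map_add' := fun x y => lp.ext <| funext fun i => inner_add_right _ _ _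
      map_smul' := fun a x => lp.ext <| funext fun i => inner_smul_right _ _ _ }
    √B fun x => by
      rw [← Real.sqrt_sq (norm_nonneg _), lp.norm_sq_eq_tsum, ← Real.sqrt_sq (norm_nonneg x),
        ← Real.sqrt_mul' _ (by positivity)]
      refine Real.sqrt_le_sqrt ?_
      simpa only [LinearMap.coe_mk, AddHom.coe_mk, norm_inner_symm] using hB x

@[simp]
theorem analysisOperator_apply {v : ι → E} {B : ℝ} {hv hB} (x : E) (i : ι) :
    analysisOperator (𝕜 := 𝕜) v B hv hB x i = inner 𝕜 (v i) x :=
  rfl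

theorem norm_analysisOperator_sq {v : ι → E} {B : ℝ} {hv hB} (x : E) :
    ‖analysisOperator (𝕜 := 𝕜) v B hv hB x‖ ^ 2 = ∑' i, ‖(inner 𝕜 x (v i) : 𝕜)‖ ^ 2 := by
  simp only [lp.norm_sq_eq_tsum, analysisOperator_apply, norm_inner_symm]

/-- A non-summable `tsum` is `0`, so a positive lower bound already forces summability. -/
theorem summable_norm_inner_sq_of_pos_mul_le_tsum {v : ι → E} {A : ℝ} (hA : 0 < A) {x : E}
    (h : A * ‖x‖ ^ 2 ≤ ∑' i, ‖(inner 𝕜 x (v i) : 𝕜)‖ ^ 2) :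
    Summable fun i => ‖(inner 𝕜 x (v i) : 𝕜)‖ ^ 2 := by
  rcases eq_or_ne x 0 with rfl | hx
  · simp
  · by_contra hs
    rw [tsum_eq_zero_of_not_summable hs] at h
    exact h.not_gt (by positivity)

end Analysis

theorem Submodule.topologicalClosure_span_ne_top_of_inner_eq_zero {𝕜 E : Type*} [RCLike 𝕜]
    [NormedAddCommGroup E] [InnerProductSpace 𝕜 E] [CompleteSpace E] {s : Set E} {g : E}
    (hg : g ≠ 0) (hs : ∀ v ∈ s, inner 𝕜 v g = 0) : (span 𝕜 s).topologicalClosure ≠ ⊤ := by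
  have hspan : span 𝕜 s ≤ (𝕜 ∙ g)ᗮ :=
    span_le.2 fun v hv => mem_orthogonal_singleton_iff_inner_left.2 (hs v hv)
  have hg_mem : g ∈ (span 𝕜 s)ᗮ :=
    orthogonal_le hspan (le_orthogonal_orthogonal _ (mem_span_singleton_self g))
  rw [Ne, topologicalClosure_eq_top_iff, eq_bot_iff]
  exact fun h => hg (h hg_mem)

theorem frame_remove_one_general
    {H : Type} [NormedAddCommGroup H] [InnerProductSpace ℂ H] [CompleteSpace H]
    (f : ℕ → H) (A B : ℝ) (hA : 0 < A) (hB : 0 < B)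
    (hframe : ∀ x : H,
      A * ‖x‖ ^ 2 ≤ ∑' n, ‖(inner ℂ x (f n) : ℂ)‖ ^ 2 ∧
      ∑' n, ‖(inner ℂ x (f n) : ℂ)‖ ^ 2 ≤ B * ‖x‖ ^ 2)
    (m : ℕ) :
    (∃ A' B' : ℝ, 0 < A' ∧ 0 < B' ∧ ∀ x : H,
      A' * ‖x‖ ^ 2 ≤ ∑' n : {n : ℕ // n ≠ m}, ‖(inner ℂ x (f n) : ℂ)‖ ^ 2 ∧
      ∑' n : {n : ℕ // n ≠ m}, ‖(inner ℂ x (f n) : ℂ)‖ ^ 2 ≤ B' * ‖x‖ ^ 2) ∨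
    (Submodule.span ℂ (f '' {n : ℕ | n ≠ m})).topologicalClosure ≠ ⊤ := by
  have hsum (x : H) : Summable fun n => ‖(inner ℂ x (f n) : ℂ)‖ ^ 2 :=
    summable_norm_inner_sq_of_pos_mul_le_tsum hA (hframe x).1
  have hsplit (x : H) := (hsum x).tsum_eq_add_tsum_ne m
  have hbessel (x : H) : ∑' n : {n : ℕ // n ≠ m}, ‖(inner ℂ x (f n) : ℂ)‖ ^ 2 ≤ B * ‖x‖ ^ 2 := by
    linarith [hsplit x, (hframe x).2, sq_nonneg ‖(inner ℂ x (f m) : ℂ)‖]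
  set T := analysisOperator (fun n : {n : ℕ // n ≠ m} => f n) B (fun x => (hsum x).subtype _)
    hbessel
  have hT (x : H) : ‖T x‖ ^ 2 = ∑' n : {n : ℕ // n ≠ m}, ‖(inner ℂ x (f n) : ℂ)‖ ^ 2 :=
    norm_analysisOperator_sq x
  have hlower (x : H) : √A * ‖x‖ ≤ ‖T x‖ + ‖innerSL ℂ (f m) x‖ := by
    rw [← pow_le_pow_iff_left₀ (by positivity) (by positivity) two_ne_zero, mul_pow,
      Real.sq_sqrt hA.le, innerSL_apply_apply, norm_inner_symm]
    nlinarith [(hframe x).1, hsplit x, hT x,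
      mul_nonneg (norm_nonneg (T x)) (norm_nonneg (inner ℂ x (f m)))]
  rcases T.exists_pos_mul_norm_le_or_exists_map_eq_zero_map_eq_one _ (Real.sqrt_pos.2 hA)
    hlower with ⟨c, hc, hTc⟩ | ⟨g, hTg, hφg⟩
  · refine .inl ⟨c ^ 2, B, by positivity, hB, fun x => ⟨?_, hbessel x⟩⟩
    rw [← hT, ← mul_pow]
    exact pow_le_pow_left₀ (by positivity) (hTc x) 2
  · refine .inr (Submodule.topologicalClosure_span_ne_top_of_inner_eq_zero (g := g) ?_ ?_)
    · rintro rfl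
      simp at hφg
    · rintro _ ⟨n, hn, rfl⟩
      simpa [T] using congrArg (· ⟨n, hn⟩) hTg

/-- Removing one vector from a frame leaves either a frame for `H` or an
incomplete set (its closed linear span is a proper subspace of `H`). -/
theorem frame_remove_one
    {H : Type} [NormedAddCommGroup H] [InnerProductSpace ℂ H] [CompleteSpace H]
    [SecondCountableTopology H] (f : ℕ → H) (A B : ℝ) (hA : 0 < A) (hB : 0 < B)
    (hframe : ∀ x : H,
      A * ‖x‖ ^ 2 ≤ ∑' n, ‖(inner ℂ x (f n) : ℂ)‖ ^ 2 ∧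
      ∑' n, ‖(inner ℂ x (f n) : ℂ)‖ ^ 2 ≤ B * ‖x‖ ^ 2)
    (m : ℕ) :
    (∃ A' B' : ℝ, 0 < A' ∧ 0 < B' ∧ ∀ x : H,
      A' * ‖x‖ ^ 2 ≤ ∑' n : {n : ℕ // n ≠ m}, ‖(inner ℂ x (f n) : ℂ)‖ ^ 2 ∧
      ∑' n : {n : ℕ // n ≠ m}, ‖(inner ℂ x (f n) : ℂ)‖ ^ 2 ≤ B' * ‖x‖ ^ 2) ∨
    (Submodule.span ℂ (f '' {n : ℕ | n ≠ m})).topologicalClosure ≠ ⊤ :=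
  frame_remove_one_general f A B hA hB hframe m
end
end

section
/- Let (f_n)_{n∈ℕ} be a frame for a separable complex Hilbert space H with frame operator S, let f ∈ H, and let c_n = ⟨S⁻¹ f, f_n⟩ be the frame coefficients of f. If (b_n)_{n∈ℕ} is any sequence of complex scalars such that f = ∑_n b_n f_n (the series converges to f in H), then ∑_n |b_n|² = ∑_n |c_n|² + ∑_n |c_n − b_n|² (an identity in [0, ∞]). In particular, the frame coefficients have minimal ℓ²-norm among all representations of f. -/
/-!
Let `g = S⁻¹x`, so that `cₙ = ⟪fₙ, g⟫`. Pairing `x = S g = ∑ cₙ fₙ` and `x = ∑ bₙ fₙ` with `g` gives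
`∑ |cₙ|² = ⟪g, x⟫ = ∑ c̄ₙ bₙ`, i.e. `c` is orthogonal to `b - c` in `ℓ²`. Pythagoras in `ℓ²`
then gives `∑ |bₙ|² = ∑ |cₙ|² + ∑ |bₙ - cₙ|²`; in `[0, ∞]` this also covers `b ∉ ℓ²`.
-/

open RCLike
open scoped InnerProductSpace

section ENNReal

variable {ι : Type*}

lemma ENNReal.tsum_ofReal_eq_top_of_not_summable {f : ι → ℝ} (hf : ∀ i, 0 ≤ f i)
    (h : ¬Summable f) : ∑' i, ENNReal.ofReal (f i) = ⊤ := by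
  by_contra htop
  exact h <| by simpa [ENNReal.toReal_ofReal (hf _)] using ENNReal.summable_toReal htop

lemma ENNReal.tsum_ofReal_eq_add_of_hasSum_zero {p q r s : ι → ℝ} (hp : ∀ i, 0 ≤ p i)
    (hq : ∀ i, 0 ≤ q i) (hr : ∀ i, 0 ≤ r i) (hp_sum : Summable p) (hs : HasSum s 0)
    (hpqs : ∀ i, r i = p i + q i + s i) :
    ∑' i, ENNReal.ofReal (r i) = ∑' i, ENNReal.ofReal (p i) + ∑' i, ENNReal.ofReal (q i) := by
  by_cases hq_sum : Summable q
  · have hr_sum : HasSum r (∑' i, p i + ∑' i, q i) := by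
      simpa only [← hpqs, add_zero] using (hp_sum.hasSum.add hq_sum.hasSum).add hs
    rw [← ENNReal.ofReal_tsum_of_nonneg hr hr_sum.summable,
      ← ENNReal.ofReal_tsum_of_nonneg hp hp_sum, ← ENNReal.ofReal_tsum_of_nonneg hq hq_sum,
      ← ENNReal.ofReal_add (tsum_nonneg hp) (tsum_nonneg hq), hr_sum.tsum_eq]
  · have hr_sum : ¬Summable r := fun hr_sum ↦ hq_sum <|
      ((hr_sum.sub hp_sum).sub hs.summable).congr fun i ↦ by rw [hpqs]; ring
    rw [tsum_ofReal_eq_top_of_not_summable hr hr_sum,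
      tsum_ofReal_eq_top_of_not_summable hq hq_sum, add_top]

end ENNReal

section InnerProductSpace

variable {ι 𝕜 E : Type*} [RCLike 𝕜] [NormedAddCommGroup E] [InnerProductSpace 𝕜 E]

lemma tsum_ofReal_norm_add_sq_of_hasSum_re_inner {u v : ι → E}
    (hu : Summable fun i ↦ ‖u i‖ ^ 2) (huv : HasSum (fun i ↦ re ⟪u i, v i⟫_𝕜) 0) :
    ∑' i, ENNReal.ofReal (‖u i + v i‖ ^ 2) =
      ∑' i, ENNReal.ofReal (‖u i‖ ^ 2) + ∑' i, ENNReal.ofReal (‖v i‖ ^ 2) :=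
  ENNReal.tsum_ofReal_eq_add_of_hasSum_zero (fun _ ↦ sq_nonneg _) (fun _ ↦ sq_nonneg _)
    (fun _ ↦ sq_nonneg _) hu (by simpa only [mul_zero] using huv.mul_left 2)
    (fun i ↦ by rw [norm_add_sq (𝕜 := 𝕜), add_right_comm])

lemma HasSum.inner_left_mul {f : ι → E} {b : ι → 𝕜} {x : E}
    (h : HasSum (fun i ↦ b i • f i) x) (y : E) :
    HasSum (fun i ↦ ⟪y, f i⟫_𝕜 * b i) ⟪y, x⟫_𝕜 := by
  simpa [inner_smul_right, mul_comm] using (innerSL 𝕜 y).hasSum h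

end InnerProductSpace

theorem frame_coefficients_minimal_general
    {H : Type} [NormedAddCommGroup H] [InnerProductSpace ℂ H]
    (f : ℕ → H)
    (S : H ≃L[ℂ] H)
    (hS : ∀ x : H, HasSum (fun n : ℕ => (inner ℂ (f n) x : ℂ) • f n) (S x))
    (x : H) (c : ℕ → ℂ) (hc : ∀ n : ℕ, c n = (inner ℂ (f n) (S.symm x) : ℂ))
    (b : ℕ → ℂ) (hb : HasSum (fun n : ℕ => b n • f n) x) :
    ∑' n, ENNReal.ofReal (‖b n‖ ^ 2) =
      ∑' n, ENNReal.ofReal (‖c n‖ ^ 2) +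
      ∑' n, ENNReal.ofReal (‖c n - b n‖ ^ 2) := by
  set g := S.symm x
  have hSg : S g = x := S.apply_symm_apply x
  have hconj : ∀ n (z : ℂ), ⟪g, f n⟫_ℂ * z = ⟪c n, z⟫_ℂ := fun n z ↦ by
    rw [hc, RCLike.inner_apply', inner_conj_symm]
  have hcc : HasSum (fun n ↦ ⟪c n, c n⟫_ℂ) ⟪g, x⟫_ℂ := by
    simpa only [← hc, hconj, hSg] using (hS g).inner_left_mul g
  have hcb : HasSum (fun n ↦ ⟪c n, b n⟫_ℂ) ⟪g, x⟫_ℂ := by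
    simpa only [hconj] using hb.inner_left_mul g
  have hc_sum : Summable fun n ↦ ‖c n‖ ^ 2 := by
    simpa only [inner_self_eq_norm_sq] using (RCLike.hasSum_re ℂ hcc).summable
  have horth : HasSum (fun n ↦ re ⟪c n, b n - c n⟫_ℂ) 0 := by
    simpa only [inner_sub_right, sub_self, map_zero] using RCLike.hasSum_re ℂ (hcb.sub hcc)
  simpa only [add_sub_cancel, norm_sub_rev (c _)] using
    tsum_ofReal_norm_add_sq_of_hasSum_re_inner hc_sum horth

/-- Duffin–Schaeffer minimality of the frame coefficients: if `(fₙ)` is a frame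
with frame operator `S`, `cₙ = ⟨S⁻¹x, fₙ⟩` are the frame coefficients of `x`,
and `x = ∑ₙ bₙ fₙ` for some scalars `(bₙ)`, then (as an identity in `[0,∞]`)
`∑ₙ |bₙ|² = ∑ₙ |cₙ|² + ∑ₙ |cₙ - bₙ|²`. -/
theorem frame_coefficients_minimal
    {H : Type} [NormedAddCommGroup H] [InnerProductSpace ℂ H] [CompleteSpace H]
    [SecondCountableTopology H] (f : ℕ → H) (A B : ℝ) (hA : 0 < A) (hB : 0 < B)
    (hframe : ∀ x : H,
      A * ‖x‖ ^ 2 ≤ ∑' n, ‖(inner ℂ x (f n) : ℂ)‖ ^ 2 ∧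
      ∑' n, ‖(inner ℂ x (f n) : ℂ)‖ ^ 2 ≤ B * ‖x‖ ^ 2)
    (S : H ≃L[ℂ] H)
    (hS : ∀ x : H, HasSum (fun n : ℕ => (inner ℂ (f n) x : ℂ) • f n) (S x))
    (x : H) (c : ℕ → ℂ) (hc : ∀ n : ℕ, c n = (inner ℂ (f n) (S.symm x) : ℂ))
    (b : ℕ → ℂ) (hb : HasSum (fun n : ℕ => b n • f n) x) :
    ∑' n, ENNReal.ofReal (‖b n‖ ^ 2) =
      ∑' n, ENNReal.ofReal (‖c n‖ ^ 2) +
      ∑' n, ENNReal.ofReal (‖c n - b n‖ ^ 2) :=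
  frame_coefficients_minimal_general f S hS x c hc b hb
end

section
/- Let H be an infinite-dimensional separable complex Hilbert space and let T : H → H be a bounded linear operator. Then there exist a positive real number a and unitary operators U₁, U₂, U₃ on H such that T = a·(U₁ + U₂ + U₃). -/
/-!
Rescale `T` to an operator `x` of norm `< 1`. Then `x - 1` is invertible of norm `≤ 2`, and an
invertible `y` of norm `≤ 2` is a sum of two unitaries: by polar decomposition `y = v |y|` with `v`
unitary, and the positive `|y|`, of norm `≤ 2`, equals `w + w⋆` for the unitary
`w = |y| / 2 + i √(1 - |y|² / 4)`. Hence `x = 1 + v w + v w⋆`.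
-/

open Complex

namespace CStarAlgebra

variable {A : Type*} [CStarAlgebra A] [PartialOrder A] [StarOrderedRing A]

lemma exists_mem_unitary_add_star_eq_of_isSelfAdjoint {a : A} (ha : IsSelfAdjoint a)
    (ha_norm : ‖a‖ ≤ 2) : ∃ u ∈ unitary A, u + star u = a := by
  set b : A := (2⁻¹ : ℝ) • a
  have hb : ‖b‖ ≤ 1 := by
    rw [norm_smul]
    norm_num
    linarith
  have hb_sa : IsSelfAdjoint b := .smul (.all _) ha
  have hs : IsSelfAdjoint (CFC.sqrt (1 - b ^ 2)) := (CFC.sqrt_nonneg _).isSelfAdjoint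
  refine ⟨_, hb_sa.self_add_I_smul_cfcSqrt_sub_sq_mem_unitary b hb, ?_⟩
  rw [star_add, hb_sa.star_eq, star_smul, hs.star_eq, Complex.star_def, conj_I]
  module

lemma _root_.IsUnit.exists_mem_unitary_eq_mul_cfcAbs {x : A} (hx : IsUnit x) :
    ∃ u ∈ unitary A, x = u * CFC.abs x := by
  obtain ⟨m, hm⟩ : IsUnit (CFC.abs x) :=
    (CFC.isUnit_sqrt_iff _ (star_mul_self_nonneg x)).2 (hx.star.mul hx)
  have hm_star : star m = m := Units.ext <| by
    rw [Units.coe_star, hm, (CFC.abs_nonneg x).isSelfAdjoint.star_eq]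
  have hu : IsUnit (x * ↑m⁻¹) := hx.mul m⁻¹.isUnit
  refine ⟨x * ↑m⁻¹, hu.mem_unitary_of_star_mul_self ?_, ?_⟩
  · calc star (x * ↑m⁻¹) * (x * ↑m⁻¹) = ↑m⁻¹ * (star x * x) * ↑m⁻¹ := by
          rw [star_mul, ← Units.coe_star_inv, hm_star]; noncomm_ring
      _ = 1 := by rw [← CFC.abs_mul_abs, ← hm]; simp
  · rw [← hm, Units.inv_mul_cancel_right]

lemma _root_.IsUnit.exists_mem_unitary_add_eq {x : A} (hx : IsUnit x) (hx_norm : ‖x‖ ≤ 2) :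
    ∃ u₁ ∈ unitary A, ∃ u₂ ∈ unitary A, u₁ + u₂ = x := by
  obtain ⟨v, hv, hx_eq⟩ := hx.exists_mem_unitary_eq_mul_cfcAbs
  obtain ⟨w, hw, hw_add⟩ := exists_mem_unitary_add_star_eq_of_isSelfAdjoint
    (CFC.abs_nonneg x).isSelfAdjoint (CFC.norm_abs.trans_le hx_norm)
  refine ⟨v * w, mul_mem hv hw, v * star w, mul_mem hv (Unitary.star_mem hw), ?_⟩
  rw [← mul_add, hw_add, ← hx_eq]

lemma exists_mem_unitary_add_add_eq_of_norm_lt_one {x : A} (hx : ‖x‖ < 1) :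
    ∃ u₁ ∈ unitary A, ∃ u₂ ∈ unitary A, ∃ u₃ ∈ unitary A, u₁ + u₂ + u₃ = x := by
  have h_one : ‖(1 : A)‖ ≤ 1 := by
    obtain _ | _ := subsingleton_or_nontrivial A
    · simp [Subsingleton.elim (1 : A) 0]
    · simp
  have h_unit : IsUnit (x - 1) := by
    simpa using (isUnit_one_sub_of_norm_lt_one hx).neg
  have h_norm : ‖x - 1‖ ≤ 2 := by linarith [norm_sub_le x 1]
  obtain ⟨u₂, hu₂, u₃, hu₃, h_add⟩ := h_unit.exists_mem_unitary_add_eq h_norm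
  exact ⟨1, one_mem _, u₂, hu₂, u₃, hu₃, by rw [add_assoc, h_add, add_sub_cancel]⟩

end CStarAlgebra

theorem operator_sum_three_unitaries_general
    {H : Type} [NormedAddCommGroup H] [InnerProductSpace ℂ H] [CompleteSpace H]
    (T : H →L[ℂ] H) :
    ∃ (a : ℝ) (U₁ U₂ U₃ : H →L[ℂ] H), 0 < a ∧
      U₁ ∈ unitary (H →L[ℂ] H) ∧ U₂ ∈ unitary (H →L[ℂ] H) ∧
      U₃ ∈ unitary (H →L[ℂ] H) ∧ T = a • (U₁ + U₂ + U₃) := by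
  set a : ℝ := ‖T‖ + 1
  have ha : 0 < a := by positivity
  have h_norm : ‖a⁻¹ • T‖ < 1 := by
    rw [norm_smul, Real.norm_of_nonneg (inv_nonneg.2 ha.le), inv_mul_lt_one₀ ha]
    exact lt_add_one _
  obtain ⟨U₁, hU₁, U₂, hU₂, U₃, hU₃, h_sum⟩ :=
    CStarAlgebra.exists_mem_unitary_add_add_eq_of_norm_lt_one h_norm
  exact ⟨a, U₁, U₂, U₃, ha, hU₁, hU₂, hU₃, by rw [h_sum, smul_inv_smul₀ ha.ne']⟩

/-- Every bounded operator on an infinite-dimensional separable complex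
Hilbert space is a positive multiple of a sum of three unitaries. -/
theorem operator_sum_three_unitaries
    {H : Type} [NormedAddCommGroup H] [InnerProductSpace ℂ H] [CompleteSpace H]
    [SecondCountableTopology H] (hH : ¬ FiniteDimensional ℂ H)
    (T : H →L[ℂ] H) :
    ∃ (a : ℝ) (U₁ U₂ U₃ : H →L[ℂ] H), 0 < a ∧
      U₁ ∈ unitary (H →L[ℂ] H) ∧ U₂ ∈ unitary (H →L[ℂ] H) ∧
      U₃ ∈ unitary (H →L[ℂ] H) ∧ T = a • (U₁ + U₂ + U₃) :=
  operator_sum_three_unitaries_general T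
end

section
/- (Hilding's perturbation theorem.) Let (f_i)_{i∈ℕ} and (g_i)_{i∈ℕ} be sequences in a separable complex Hilbert space H such that the closed linear span of (f_i) is H, and suppose there are constants λ₁, λ₂ ∈ [0, 1) such that for all finitely supported scalar sequences (a_i), ‖∑_i a_i (f_i − g_i)‖ ≤ λ₁‖∑_i a_i f_i‖ + λ₂‖∑_i a_i g_i‖. Then the map f_i ↦ g_i extends to a well-defined invertible bounded linear operator T : H → H (a continuous linear equivalence of H onto H) with T f_i = g_i for all i. -/
/-!
Since `(1 - λ₂) ‖∑ aᵢ gᵢ‖ ≤ (1 + λ₁) ‖∑ aᵢ fᵢ‖`, the map `fᵢ ↦ gᵢ` extends by density to a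
bounded operator `T`, and the perturbation inequality survives as
`‖x - T x‖ ≤ λ₁ ‖x‖ + λ₂ ‖T x‖` on all of `H`. Every operator `Tₜ = 1 + t (T - 1)`, `t ∈ [0, 1]`,
satisfies the same inequality with `λ₁` replaced by `t λ₁ + (1 - t) λ₂`, hence is bounded below by
a constant independent of `t`. The set of `t` for which `Tₜ` is invertible is open, contains `0`,
and, thanks to the uniform bound on the inverses, is closed; by connectedness it contains `1`.
-/

section NormedRing

variable {R : Type*} [NormedRing R] [HasSummableGeomSeries R]

theorem isUnit_of_mem_closure_setOf_norm_inverse_le {C : ℝ} (hC : 0 < C) {a : R}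
    (ha : a ∈ closure {b : R | IsUnit b ∧ ‖Ring.inverse b‖ ≤ C}) : IsUnit a := by
  nontriviality R
  obtain ⟨_, ⟨⟨u, rfl⟩, hu⟩, hau⟩ := Metric.mem_closure_iff.1 ha C⁻¹ (inv_pos.2 hC)
  rw [Ring.inverse_unit] at hu
  rw [dist_eq_norm] at hau
  exact ⟨u.ofNearby a (hau.trans_le (inv_anti₀ (Units.norm_pos _) hu)), rfl⟩

theorem isUnit_of_continuous_of_norm_inverse_le {X : Type*} [TopologicalSpace X]
    [PreconnectedSpace X] {γ : X → R} (hγ : Continuous γ) {C : ℝ} (hC : 0 < C)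
    (hγC : ∀ x, IsUnit (γ x) → ‖Ring.inverse (γ x)‖ ≤ C) {x₀ : X} (hx₀ : IsUnit (γ x₀))
    (x : X) : IsUnit (γ x) := by
  have hclosed : IsClosed {x | IsUnit (γ x)} := by
    refine isClosed_of_closure_subset fun y hy => isUnit_of_mem_closure_setOf_norm_inverse_le hC
      (closure_mono ?_ (mem_closure_image hγ.continuousAt hy))
    rintro _ ⟨z, hz, rfl⟩
    exact ⟨hz, hγC z hz⟩
  have huniv := IsClopen.eq_univ ⟨hclosed, Units.isOpen.preimage hγ⟩ ⟨x₀, hx₀⟩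
  exact Set.eq_univ_iff_forall.1 huniv x

end NormedRing

theorem mul_norm_le_mul_norm_of_norm_sub_le {E : Type*} [SeminormedAddGroup E] {x y : E}
    {l₁ l₂ : ℝ} (h : ‖x - y‖ ≤ l₁ * ‖x‖ + l₂ * ‖y‖) : (1 - l₁) * ‖x‖ ≤ (1 + l₂) * ‖y‖ := by
  linarith [norm_le_norm_add_norm_sub' x y]

theorem norm_sub_add_smul_sub_le {𝕜 E : Type*} [NormedField 𝕜] [SeminormedAddCommGroup E]
    [NormedSpace 𝕜 E] {x y : E} {l₁ l₂ : ℝ} (hl₂ : 0 ≤ l₂)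
    (h : ‖x - y‖ ≤ l₁ * ‖x‖ + l₂ * ‖y‖) (c : 𝕜) :
    ‖x - (x + c • (y - x))‖ ≤ (‖c‖ * l₁ + ‖1 - c‖ * l₂) * ‖x‖ + l₂ * ‖x + c • (y - x)‖ := by
  have hcy : ‖c‖ * ‖y‖ ≤ ‖x + c • (y - x)‖ + ‖1 - c‖ * ‖x‖ := by
    calc ‖c‖ * ‖y‖ = ‖(x + c • (y - x)) - (1 - c) • x‖ := by rw [← norm_smul]; congr 1; module
      _ ≤ _ := by rw [← norm_smul]; exact norm_sub_le _ _
  calc ‖x - (x + c • (y - x))‖ = ‖c‖ * ‖x - y‖ := by rw [← norm_smul]; congr 1; module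
    _ ≤ ‖c‖ * (l₁ * ‖x‖ + l₂ * ‖y‖) := by gcongr
    _ ≤ _ := by nlinarith [mul_le_mul_of_nonneg_left hcy hl₂]

namespace ContinuousLinearMap

theorem norm_inverse_le_of_bound {𝕜 E : Type*} [NontriviallyNormedField 𝕜]
    [NormedAddCommGroup E] [NormedSpace 𝕜 E] {T : E →L[𝕜] E} (hT : IsUnit T) {m : ℝ} (hm : 0 < m)
    (h : ∀ x, m * ‖x‖ ≤ ‖T x‖) : ‖Ring.inverse T‖ ≤ m⁻¹ := by
  obtain ⟨u, rfl⟩ := hT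
  rw [Ring.inverse_unit]
  refine opNorm_le_bound _ (inv_nonneg.2 hm.le) fun y => ?_
  rw [inv_mul_eq_div, le_div_iff₀' hm]
  calc m * ‖(↑u⁻¹ : E →L[𝕜] E) y‖ ≤ ‖(u : E →L[𝕜] E) ((↑u⁻¹ : E →L[𝕜] E) y)‖ := h _
    _ = ‖y‖ := by rw [← mul_apply_eq_comp, u.mul_inv]; rfl

theorem isUnit_of_norm_sub_apply_le {𝕜 E : Type*} [RCLike 𝕜] [NormedAddCommGroup E]
    [NormedSpace 𝕜 E] [CompleteSpace E] (T : E →L[𝕜] E) {l₁ l₂ : ℝ}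
    (hl₁ : l₁ < 1) (hl₂ : 0 ≤ l₂) (hl₂' : l₂ < 1)
    (hT : ∀ x, ‖x - T x‖ ≤ l₁ * ‖x‖ + l₂ * ‖T x‖) : IsUnit T := by
  let γ : unitInterval → E →L[𝕜] E := fun t => 1 + ((t : ℝ) : 𝕜) • (T - 1)
  set m := (1 - max l₁ l₂) / (1 + l₂)
  have hm : 0 < m := div_pos (by simp [hl₁, hl₂']) (by linarith)
  have hbound : ∀ t x, m * ‖x‖ ≤ ‖γ t x‖ := by
    intro t x
    have hγx : γ t x = x + ((t : ℝ) : 𝕜) • (T x - x) := by simp [γ]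
    have hconvex : (t : ℝ) * l₁ + (1 - t) * l₂ ≤ max l₁ l₂ := by
      nlinarith [le_max_left l₁ l₂, le_max_right l₁ l₂, t.2.1, t.2.2]
    have := mul_norm_le_mul_norm_of_norm_sub_le (norm_sub_add_smul_sub_le hl₂ (hT x) (t : 𝕜))
    have hnorm_t : ‖((t : ℝ) : 𝕜)‖ = t := by rw [RCLike.norm_ofReal, abs_of_nonneg t.2.1]
    have hnorm_one_sub_t : ‖1 - ((t : ℝ) : 𝕜)‖ = 1 - t := by
      rw [← RCLike.ofReal_one, ← RCLike.ofReal_sub, RCLike.norm_ofReal,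
        abs_of_nonneg (sub_nonneg.2 t.2.2)]
    rw [hnorm_t, hnorm_one_sub_t, ← hγx] at this
    rw [div_mul_eq_mul_div, div_le_iff₀ (by linarith)]
    nlinarith [norm_nonneg x]
  have hγ : Continuous γ := by fun_prop
  have h₁ := isUnit_of_continuous_of_norm_inverse_le hγ (inv_pos.2 hm)
    (fun t ht => norm_inverse_le_of_bound ht hm (hbound t)) (x₀ := 0) (by simp [γ]) 1
  simpa [γ] using h₁

end ContinuousLinearMap

theorem exists_continuousLinearMap_apply_eq_of_norm_sub_le {𝕜 E ι : Type*}
    [NontriviallyNormedField 𝕜]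
    [NormedAddCommGroup E] [NormedSpace 𝕜 E] [CompleteSpace E] {f g : ι → E}
    (hf : (Submodule.span 𝕜 (Set.range f)).topologicalClosure = ⊤) {l₁ l₂ : ℝ} (hl₂ : l₂ < 1)
    (hfg : ∀ a : ι →₀ 𝕜,
      ‖Finsupp.linearCombination 𝕜 f a - Finsupp.linearCombination 𝕜 g a‖ ≤
        l₁ * ‖Finsupp.linearCombination 𝕜 f a‖ + l₂ * ‖Finsupp.linearCombination 𝕜 g a‖) :
    ∃ T : E →L[𝕜] E, (∀ i, T (f i) = g i) ∧ ∀ x, ‖x - T x‖ ≤ l₁ * ‖x‖ + l₂ * ‖T x‖ := by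
  set φ := Finsupp.linearCombination 𝕜 f
  set ψ := Finsupp.linearCombination 𝕜 g
  have hdense : DenseRange φ := by
    change Dense (LinearMap.range φ : Set E)
    rw [Finsupp.range_linearCombination]
    exact Submodule.dense_iff_topologicalClosure_eq_top.2 hf
  have hψφ : ∀ a, ‖ψ a‖ ≤ (1 + l₁) / (1 - l₂) * ‖φ a‖ := fun a => by
    rw [div_mul_eq_mul_div, le_div_iff₀ (sub_pos.2 hl₂)]
    have hgf : ‖ψ a - φ a‖ ≤ l₂ * ‖ψ a‖ + l₁ * ‖φ a‖ := by
      rw [norm_sub_rev]; linarith [hfg a]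
    linarith [mul_norm_le_mul_norm_of_norm_sub_le hgf]
  have hTφ : ∀ a, ψ.extendOfNorm φ (φ a) = ψ a := LinearMap.extendOfNorm_eq hdense ⟨_, hψφ⟩
  refine ⟨ψ.extendOfNorm φ, fun i => by simpa [φ, ψ] using hTφ (Finsupp.single i 1), fun x => ?_⟩
  refine hdense.induction_on x (isClosed_le (by fun_prop) (by fun_prop)) fun a => ?_
  rw [hTφ]
  exact hfg a

theorem hilding_perturbation_general
    {H : Type} [NormedAddCommGroup H] [InnerProductSpace ℂ H] [CompleteSpace H]
    (f g : ℕ → H)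
    (hcomplete : (Submodule.span ℂ (Set.range f)).topologicalClosure = ⊤)
    (lam₁ lam₂ : ℝ) (hlam₁' : lam₁ < 1)
    (hlam₂ : 0 ≤ lam₂) (hlam₂' : lam₂ < 1)
    (hper : ∀ a : ℕ →₀ ℂ,
      ‖∑ i ∈ a.support, a i • (f i - g i)‖ ≤
        lam₁ * ‖∑ i ∈ a.support, a i • f i‖ +
        lam₂ * ‖∑ i ∈ a.support, a i • g i‖) :
    ∃ T : H ≃L[ℂ] H, ∀ i : ℕ, T (f i) = g i := by
  have hfg : ∀ a : ℕ →₀ ℂ,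
      ‖Finsupp.linearCombination ℂ f a - Finsupp.linearCombination ℂ g a‖ ≤
        lam₁ * ‖Finsupp.linearCombination ℂ f a‖ + lam₂ * ‖Finsupp.linearCombination ℂ g a‖ := by
    simpa [Finsupp.linearCombination_apply, Finsupp.sum, smul_sub] using hper
  obtain ⟨T, hTfg, hT⟩ := exists_continuousLinearMap_apply_eq_of_norm_sub_le hcomplete hlam₂' hfg
  obtain ⟨u, rfl⟩ := T.isUnit_of_norm_sub_apply_le hlam₁' hlam₂ hlam₂' hT
  exact ⟨ContinuousLinearEquiv.unitsEquiv ℂ H u, hTfg⟩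

/-- Hilding's perturbation theorem: if `(fᵢ)` is complete in `H` and
`‖∑ aᵢ(fᵢ - gᵢ)‖ ≤ λ₁‖∑ aᵢ fᵢ‖ + λ₂‖∑ aᵢ gᵢ‖` for all finitely supported
scalars with `0 ≤ λ₁, λ₂ < 1`, then `fᵢ ↦ gᵢ` extends to an invertible bounded
operator of `H` onto `H`. -/
theorem hilding_perturbation
    {H : Type} [NormedAddCommGroup H] [InnerProductSpace ℂ H] [CompleteSpace H]
    [SecondCountableTopology H] (f g : ℕ → H)
    (hcomplete : (Submodule.span ℂ (Set.range f)).topologicalClosure = ⊤)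
    (lam₁ lam₂ : ℝ) (hlam₁ : 0 ≤ lam₁) (hlam₁' : lam₁ < 1)
    (hlam₂ : 0 ≤ lam₂) (hlam₂' : lam₂ < 1)
    (hper : ∀ a : ℕ →₀ ℂ,
      ‖∑ i ∈ a.support, a i • (f i - g i)‖ ≤
        lam₁ * ‖∑ i ∈ a.support, a i • f i‖ +
        lam₂ * ‖∑ i ∈ a.support, a i • g i‖) :
    ∃ T : H ≃L[ℂ] H, ∀ i : ℕ, T (f i) = g i :=
  hilding_perturbation_general f g hcomplete lam₁ lam₂ hlam₁' hlam₂ hlam₂' hper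
end

section
/- Let (f_i)_{i∈ℕ} be a frame for a separable complex Hilbert space H and let (g_i)_{i∈ℕ} be a sequence in H. The following are equivalent: (1) (g_i) is a frame for H; (2) there exists a constant M > 0 such that for all f ∈ H, ∑_i |⟨f, f_i − g_i⟩|² ≤ M · min( ∑_i |⟨f, f_i⟩|², ∑_i |⟨f, g_i⟩|² ). -/
/-!
Write `F_h(x) = ∑ᵢ |⟪x, hᵢ⟫|² ∈ [0, ∞]` (`frameSum ℂ h`) and `u ≲ v` (`Dominated u v`) for
`u ≤ C v` with a constant `C`. A sequence `h` is a frame iff `F_h ≲ ‖x‖² ≲ F_h`, and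
`|a - b|² ≤ 2 (|a|² + |b|²)` shows that each of `F_f`, `F_g`, `F_{f-g}` is `≲` the sum of the
other two. If `g` is a frame, then `F_{f-g} ≲ F_f + F_g ≲ ‖x‖² ≲ min F_f F_g`. Conversely,
`F_{f-g} ≲ min F_f F_g` gives `F_g ≲ F_f + F_{f-g} ≲ F_f` and symmetrically `F_f ≲ F_g`, so
`F_g ≍ F_f ≍ ‖x‖²`. Working in `[0, ∞]` makes this independent of summability, which for `g` is
only known a posteriori.
-/

open scoped ENNReal NNReal

noncomputable section

def IsFrame {H : Type} [NormedAddCommGroup H] [InnerProductSpace ℂ H]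
    (f : ℕ → H) : Prop :=
  ∃ A B : ℝ, 0 < A ∧ 0 < B ∧ ∀ x : H,
    A * ‖x‖ ^ 2 ≤ ∑' n, ‖(inner ℂ x (f n) : ℂ)‖ ^ 2 ∧
    ∑' n, ‖(inner ℂ x (f n) : ℂ)‖ ^ 2 ≤ B * ‖x‖ ^ 2

def Dominated {α : Type*} (u v : α → ℝ≥0∞) : Prop :=
  ∃ C : ℝ≥0, ∀ a, u a ≤ C * v a

namespace Dominated

variable {α : Type*} {u v w : α → ℝ≥0∞}

lemma of_le (h : ∀ a, u a ≤ v a) : Dominated u v :=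
  ⟨1, fun a => by simpa using h a⟩

lemma refl (u : α → ℝ≥0∞) : Dominated u u :=
  of_le fun _ => le_rfl

lemma trans (huv : Dominated u v) (hvw : Dominated v w) : Dominated u w := by
  obtain ⟨C, hC⟩ := huv
  obtain ⟨C', hC'⟩ := hvw
  refine ⟨C * C', fun a => ?_⟩
  calc u a ≤ C * v a := hC a
    _ ≤ C * (C' * w a) := by gcongr; exact hC' a
    _ = ↑(C * C') * w a := by push_cast; ring

lemma add (huw : Dominated u w) (hvw : Dominated v w) : Dominated (u + v) w := by
  obtain ⟨C, hC⟩ := huw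
  obtain ⟨C', hC'⟩ := hvw
  refine ⟨C + C', fun a => ?_⟩
  calc u a + v a ≤ C * w a + C' * w a := add_le_add (hC a) (hC' a)
    _ = ↑(C + C') * w a := by push_cast; ring

lemma le_inf (huv : Dominated u v) (huw : Dominated u w) : Dominated u (v ⊓ w) := by
  obtain ⟨C, hC⟩ := huv
  obtain ⟨C', hC'⟩ := huw
  refine ⟨max C C', fun a => ?_⟩
  rw [Pi.inf_apply, ENNReal.coe_max, mul_min]
  exact le_min ((hC a).trans (by gcongr; exact le_max_left _ _))
    ((hC' a).trans (by gcongr; exact le_max_right _ _))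

end Dominated

lemma dominated_iff_exists_pos {α : Type*} {u v : α → ℝ≥0∞} :
    Dominated u v ↔ ∃ M : ℝ, 0 < M ∧ ∀ a, u a ≤ ENNReal.ofReal M * v a := by
  constructor
  · rintro ⟨C, hC⟩
    refine ⟨C + 1, by positivity, fun a => (hC a).trans ?_⟩
    gcongr
    rw [← ENNReal.ofReal_coe_nnreal]
    exact ENNReal.ofReal_le_ofReal (by linarith)
  · rintro ⟨M, -, hM⟩
    exact ⟨M.toNNReal, hM⟩

lemma norm_sub_sq_le {E : Type*} [SeminormedAddCommGroup E] (a b : E) :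
    ‖a - b‖ ^ 2 ≤ 2 * (‖a‖ ^ 2 + ‖b‖ ^ 2) :=
  (pow_le_pow_left₀ (norm_nonneg _) (norm_sub_le a b) 2).trans add_sq_le

section FrameSum

variable (𝕜 : Type*) {H ι : Type*} [RCLike 𝕜] [NormedAddCommGroup H] [InnerProductSpace 𝕜 H]

def frameSum (f : ι → H) (x : H) : ℝ≥0∞ :=
  ∑' i, ENNReal.ofReal (‖(inner 𝕜 x (f i) : 𝕜)‖ ^ 2)

lemma frameSum_sub_le (f g : ι → H) (x : H) :
    frameSum 𝕜 (f - g) x ≤ 2 * (frameSum 𝕜 f x + frameSum 𝕜 g x) := by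
  rw [frameSum, frameSum, frameSum, ← ENNReal.tsum_add, ← ENNReal.tsum_mul_left]
  refine ENNReal.tsum_le_tsum fun i => ?_
  rw [← ENNReal.ofReal_add (by positivity) (by positivity), ← ENNReal.ofReal_ofNat 2,
    ← ENNReal.ofReal_mul zero_le_two, Pi.sub_apply, inner_sub_right]
  exact ENNReal.ofReal_le_ofReal (norm_sub_sq_le _ _)

lemma dominated_frameSum_sub (f g : ι → H) :
    Dominated (frameSum 𝕜 (f - g)) (frameSum 𝕜 f + frameSum 𝕜 g) :=
  ⟨2, frameSum_sub_le 𝕜 f g⟩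

lemma frameSum_sub_comm (f g : ι → H) : frameSum 𝕜 (f - g) = frameSum 𝕜 (g - f) := by
  ext x
  simp only [frameSum, Pi.sub_apply, inner_sub_right, norm_sub_rev]

variable {𝕜}

lemma frameSum_eq_ofReal_tsum {f : ι → H} {x : H}
    (hs : Summable fun i => ‖(inner 𝕜 x (f i) : 𝕜)‖ ^ 2) :
    frameSum 𝕜 f x = ENNReal.ofReal (∑' i, ‖(inner 𝕜 x (f i) : 𝕜)‖ ^ 2) :=
  (ENNReal.ofReal_tsum_of_nonneg (fun _ => sq_nonneg _) hs).symm

lemma summable_of_frameSum_ne_top {f : ι → H} {x : H} (h : frameSum 𝕜 f x ≠ ∞) :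
    Summable fun i => ‖(inner 𝕜 x (f i) : 𝕜)‖ ^ 2 :=
  (ENNReal.summable_toReal h).congr fun _ => ENNReal.toReal_ofReal (sq_nonneg _)

end FrameSum

lemma ofReal_le_coe_mul_ofReal_iff {s t : ℝ} {C : ℝ≥0} (hs : 0 ≤ s) :
    ENNReal.ofReal t ≤ C * ENNReal.ofReal s ↔ t ≤ C * s := by
  rw [← ENNReal.ofReal_coe_nnreal, ← ENNReal.ofReal_mul C.coe_nonneg,
    ENNReal.ofReal_le_ofReal_iff (by positivity)]

variable {H : Type} [NormedAddCommGroup H] [InnerProductSpace ℂ H]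

lemma IsFrame.summable {f : ℕ → H} (hf : IsFrame f) (x : H) :
    Summable fun n => ‖(inner ℂ x (f n) : ℂ)‖ ^ 2 := by
  obtain ⟨A, _, hA, _, h⟩ := hf
  by_contra hs
  have hx : x = 0 := by
    have hAx := (h x).1
    rw [tsum_eq_zero_of_not_summable hs] at hAx
    have : ‖x‖ ^ 2 ≤ 0 := nonpos_of_mul_nonpos_right hAx hA
    simpa using this
  exact hs (by simp [hx])

lemma isFrame_iff (f : ℕ → H) :
    IsFrame f ↔ Dominated (fun x => ENNReal.ofReal (‖x‖ ^ 2)) (frameSum ℂ f) ∧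
      Dominated (frameSum ℂ f) (fun x => ENNReal.ofReal (‖x‖ ^ 2)) := by
  have hS : ∀ x, 0 ≤ ∑' n, ‖(inner ℂ x (f n) : ℂ)‖ ^ 2 := fun x =>
    tsum_nonneg fun _ => sq_nonneg _
  constructor
  · intro hf
    have hs := hf.summable
    obtain ⟨A, B, hA, hB, h⟩ := hf
    refine ⟨⟨(A⁻¹).toNNReal, fun x => ?_⟩, ⟨B.toNNReal, fun x => ?_⟩⟩
    · rw [frameSum_eq_ofReal_tsum (hs x), ofReal_le_coe_mul_ofReal_iff (hS x),
        Real.coe_toNNReal _ (by positivity), inv_mul_eq_div, le_div_iff₀ hA]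
      linarith [(h x).1]
    · rw [frameSum_eq_ofReal_tsum (hs x), ofReal_le_coe_mul_ofReal_iff (sq_nonneg _),
        Real.coe_toNNReal _ hB.le]
      exact (h x).2
  · rintro ⟨⟨C, hC⟩, ⟨C', hC'⟩⟩
    have hs : ∀ x, Summable fun n => ‖(inner ℂ x (f n) : ℂ)‖ ^ 2 := fun x =>
      summable_of_frameSum_ne_top <| ne_top_of_le_ne_top
        (ENNReal.mul_ne_top ENNReal.coe_ne_top ENNReal.ofReal_ne_top) (hC' x)
    refine ⟨(C + 1 : ℝ)⁻¹, C' + 1, by positivity, by positivity, fun x => ⟨?_, ?_⟩⟩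
    · have hNS := hC x
      rw [frameSum_eq_ofReal_tsum (hs x), ofReal_le_coe_mul_ofReal_iff (hS x)] at hNS
      rw [inv_mul_le_iff₀ (by positivity)]
      nlinarith [hS x]
    · have hSN := hC' x
      rw [frameSum_eq_ofReal_tsum (hs x), ofReal_le_coe_mul_ofReal_iff (sq_nonneg _)] at hSN
      nlinarith [sq_nonneg ‖x‖]

theorem perturbation_frame_iff_general
    {H : Type} [NormedAddCommGroup H] [InnerProductSpace ℂ H] (f g : ℕ → H) (hf : IsFrame f) :
    IsFrame g ↔
      ∃ M : ℝ, 0 < M ∧ ∀ x : H,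
        ∑' i, ENNReal.ofReal (‖(inner ℂ x (f i - g i) : ℂ)‖ ^ 2) ≤
          ENNReal.ofReal M *
            min (∑' i, ENNReal.ofReal (‖(inner ℂ x (f i) : ℂ)‖ ^ 2))
                (∑' i, ENNReal.ofReal (‖(inner ℂ x (g i) : ℂ)‖ ^ 2)) := by
  obtain ⟨hNF, hFN⟩ := (isFrame_iff f).1 hf
  refine (isFrame_iff g).trans (Iff.trans ?_ dominated_iff_exists_pos)
  constructor
  · rintro ⟨hNG, hGN⟩
    exact (dominated_frameSum_sub ℂ f g).trans ((hFN.add hGN).trans (hNF.le_inf hNG))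
  · intro hD
    have hDF := hD.trans (Dominated.of_le fun _ => inf_le_left)
    have hDG := hD.trans (Dominated.of_le fun _ => inf_le_right)
    have hGF : Dominated (frameSum ℂ g) (frameSum ℂ f) := by
      simpa only [sub_sub_cancel] using
        (dominated_frameSum_sub ℂ f (f - g)).trans ((Dominated.refl _).add hDF)
    have hFG : Dominated (frameSum ℂ f) (frameSum ℂ g) := by
      have hF := dominated_frameSum_sub ℂ g (g - f)
      rw [sub_sub_cancel, ← frameSum_sub_comm] at hF
      exact hF.trans ((Dominated.refl _).add hDG)
    exact ⟨hNF.trans hFG, hGF.trans hFN⟩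

/-- Casazza's necessary and sufficient perturbation condition: if `(fᵢ)` is a
frame for `H` and `(gᵢ)` a sequence in `H`, then `(gᵢ)` is a frame iff there is
`M > 0` with `∑ᵢ |⟨x, fᵢ - gᵢ⟩|² ≤ M · min(∑ᵢ |⟨x, fᵢ⟩|², ∑ᵢ |⟨x, gᵢ⟩|²)`
for every `x` (an inequality of sums in `[0,∞]`). -/
theorem perturbation_frame_iff
    {H : Type} [NormedAddCommGroup H] [InnerProductSpace ℂ H] [CompleteSpace H]
    [SecondCountableTopology H] (f g : ℕ → H) (hf : IsFrame f) :
    IsFrame g ↔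
      ∃ M : ℝ, 0 < M ∧ ∀ x : H,
        ∑' i, ENNReal.ofReal (‖(inner ℂ x (f i - g i) : ℂ)‖ ^ 2) ≤
          ENNReal.ofReal M *
            min (∑' i, ENNReal.ofReal (‖(inner ℂ x (f i) : ℂ)‖ ^ 2))
                (∑' i, ENNReal.ofReal (‖(inner ℂ x (g i) : ℂ)‖ ^ 2)) :=
  perturbation_frame_iff_general f g hf
end
end

section
/- Let (f_i)_{i∈ℕ} be a frame for a separable complex Hilbert space H with frame bounds A, B > 0, let (g_i)_{i∈ℕ} be a sequence in H, and let λ₁, μ ≥ 0 satisfy λ₁ + μ/√A < 1. If for every f ∈ H one has ( ∑_i |⟨f, f_i − g_i⟩|² )^{1/2} ≤ λ₁ ( ∑_i |⟨f, f_i⟩|² )^{1/2} + μ‖f‖, then (g_i) is also a frame for H. -/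
/-!
Fix `x` and compare the coefficient sequences `u = (⟪x, fᵢ⟫)`, `v = (⟪x, gᵢ⟫)` and `u - v` in `ℓ²`.
The frame bounds place `‖u‖` between `√A ‖x‖` and `√B ‖x‖`, and the hypothesis says
`‖u - v‖ ≤ λ₁ ‖u‖ + μ ‖x‖`. The triangle inequality in `ℓ²` then gives
`((1 - λ₁) √A - μ) ‖x‖ ≤ ‖v‖ ≤ ((1 + λ₁) √B + μ) ‖x‖`, and the left constant is positive
exactly because `λ₁ + μ / √A < 1`.
-/

open scoped InnerProductSpace

namespace Real

theorem sqrt_mul_eq_sqrt_mul_sq {a t : ℝ} (ha : 0 ≤ a) (ht : 0 ≤ t) : √a * t = √(a * t ^ 2) := by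
  rw [sqrt_mul ha, sqrt_sq ht]

theorem sqrt_mul_le_sqrt_iff {a t s : ℝ} (ha : 0 ≤ a) (ht : 0 ≤ t) (hs : 0 ≤ s) :
    √a * t ≤ √s ↔ a * t ^ 2 ≤ s := by
  rw [sqrt_mul_eq_sqrt_mul_sq ha ht, sqrt_le_sqrt_iff hs]

theorem sqrt_le_sqrt_mul_iff {a t s : ℝ} (ha : 0 ≤ a) (ht : 0 ≤ t) :
    √s ≤ √a * t ↔ s ≤ a * t ^ 2 := by
  rw [sqrt_mul_eq_sqrt_mul_sq ha ht, sqrt_le_sqrt_iff (by positivity)]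

end Real

theorem norm_bounds_of_norm_sub_le {E : Type*} [SeminormedAddCommGroup E] {u v : E}
    {a b lam c : ℝ} (hlo : a ≤ ‖u‖) (hhi : ‖u‖ ≤ b) (hlam₀ : 0 ≤ lam) (hlam₁ : lam ≤ 1)
    (h : ‖u - v‖ ≤ lam * ‖u‖ + c) :
    (1 - lam) * a - c ≤ ‖v‖ ∧ ‖v‖ ≤ (1 + lam) * b + c := by
  have hle := norm_sub_le u (u - v)
  have hge := norm_sub_norm_le u (u - v)
  rw [sub_sub_cancel] at hle hge
  constructor <;> nlinarith

section SquareSummable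

variable {ι : Type*}

theorem Summable.of_tsum_pos {a : ι → ℝ} (h : 0 < ∑' i, a i) : Summable a := by
  by_contra hns
  rw [tsum_eq_zero_of_not_summable hns] at h
  exact h.false

theorem summable_and_sqrt_tsum_le_of_rpow_half_le {a : ι → ℝ} (ha : ∀ i, 0 ≤ a i) {c : ℝ}
    (hc : 0 ≤ c) (h : (∑' i, ENNReal.ofReal (a i)) ^ ((1 : ℝ) / 2) ≤ ENNReal.ofReal c) :
    Summable a ∧ √(∑' i, a i) ≤ c := by
  have hne : ∑' i, ENNReal.ofReal (a i) ≠ ⊤ := fun htop => by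
    simp [htop] at h
  have hsum : Summable a := by
    simpa [ENNReal.toReal_ofReal (ha _)] using ENNReal.summable_toReal hne
  refine ⟨hsum, ?_⟩
  rwa [← ENNReal.ofReal_tsum_of_nonneg ha hsum,
    ENNReal.ofReal_rpow_of_nonneg (tsum_nonneg ha) (by norm_num),
    ENNReal.ofReal_le_ofReal_iff hc, ← Real.sqrt_eq_rpow] at h

variable {E : Type*} [NormedAddCommGroup E]

theorem memℓp_two_of_summable_sq {z : ι → E} (h : Summable fun i => ‖z i‖ ^ 2) :
    Memℓp z 2 :=
  memℓp_gen (by simpa using h)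

theorem lp.norm_two_eq_sqrt_tsum (z : lp (fun _ : ι => E) 2) :
    ‖z‖ = √(∑' i, ‖z i‖ ^ 2) := by
  rw [lp.norm_eq_tsum_rpow (by norm_num), Real.sqrt_eq_rpow]
  norm_num

theorem sqrt_tsum_sq_bounds_of_sqrt_tsum_sub_le {u v : ι → E} {a b lam c : ℝ}
    (hu : Summable fun i => ‖u i‖ ^ 2) (huv : Summable fun i => ‖u i - v i‖ ^ 2)
    (hlo : a ≤ √(∑' i, ‖u i‖ ^ 2)) (hhi : √(∑' i, ‖u i‖ ^ 2) ≤ b)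
    (hlam₀ : 0 ≤ lam) (hlam₁ : lam ≤ 1)
    (h : √(∑' i, ‖u i - v i‖ ^ 2) ≤ lam * √(∑' i, ‖u i‖ ^ 2) + c) :
    (1 - lam) * a - c ≤ √(∑' i, ‖v i‖ ^ 2) ∧ √(∑' i, ‖v i‖ ^ 2) ≤ (1 + lam) * b + c := by
  let U : lp (fun _ : ι => E) 2 := ⟨u, memℓp_two_of_summable_sq hu⟩
  let W : lp (fun _ : ι => E) 2 := ⟨u - v, memℓp_two_of_summable_sq huv⟩
  have hU : ‖U‖ = √(∑' i, ‖u i‖ ^ 2) := lp.norm_two_eq_sqrt_tsum U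
  have hW : ‖W‖ = √(∑' i, ‖u i - v i‖ ^ 2) := lp.norm_two_eq_sqrt_tsum W
  have hV : ‖U - W‖ = √(∑' i, ‖v i‖ ^ 2) := by
    rw [lp.norm_two_eq_sqrt_tsum]
    congr! 4 with i
    exact congrArg norm (sub_sub_cancel (u i) (v i))
  rw [← hU] at hlo hhi h
  rw [← hW, ← sub_sub_cancel U W] at h
  rw [← hV]
  exact norm_bounds_of_norm_sub_le hlo hhi hlam₀ hlam₁ h

end SquareSummable

theorem summable_inner_sq_of_mul_norm_sq_le {𝕜 E ι : Type*} [RCLike 𝕜] [NormedAddCommGroup E]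
    [InnerProductSpace 𝕜 E] {f : ι → E} {A : ℝ} (hA : 0 < A) {x : E}
    (h : A * ‖x‖ ^ 2 ≤ ∑' i, ‖⟪x, f i⟫_𝕜‖ ^ 2) : Summable fun i => ‖⟪x, f i⟫_𝕜‖ ^ 2 := by
  rcases eq_or_ne x 0 with rfl | hx
  · simp
  · exact .of_tsum_pos (lt_of_lt_of_le (by positivity) h)

theorem perturbation_frame_general
    {H : Type} [NormedAddCommGroup H] [InnerProductSpace ℂ H]
    (f g : ℕ → H) (A B : ℝ) (hA : 0 < A) (hB : 0 < B)
    (hframe : ∀ x : H,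
      A * ‖x‖ ^ 2 ≤ ∑' i, ‖(inner ℂ x (f i) : ℂ)‖ ^ 2 ∧
      ∑' i, ‖(inner ℂ x (f i) : ℂ)‖ ^ 2 ≤ B * ‖x‖ ^ 2)
    (lam mu : ℝ) (hlam : 0 ≤ lam) (hmu : 0 ≤ mu)
    (hsmall : lam + mu / Real.sqrt A < 1)
    (hper : ∀ x : H,
      (∑' i, ENNReal.ofReal (‖(inner ℂ x (f i - g i) : ℂ)‖ ^ 2)) ^ ((1 : ℝ) / 2) ≤
        ENNReal.ofReal
          (lam * Real.sqrt (∑' i, ‖(inner ℂ x (f i) : ℂ)‖ ^ 2) + mu * ‖x‖)) :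
    ∃ A' B' : ℝ, 0 < A' ∧ 0 < B' ∧ ∀ x : H,
      A' * ‖x‖ ^ 2 ≤ ∑' i, ‖(inner ℂ x (g i) : ℂ)‖ ^ 2 ∧
      ∑' i, ‖(inner ℂ x (g i) : ℂ)‖ ^ 2 ≤ B' * ‖x‖ ^ 2 := by
  have hsA : 0 < √A := Real.sqrt_pos.2 hA
  have hlam₁ : lam ≤ 1 := by linarith [div_nonneg hmu hsA.le]
  have hC : 0 < (1 - lam) * √A - mu := by
    linarith [(div_lt_iff₀ hsA).1 (show mu / √A < 1 - lam by linarith)]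
  refine ⟨((1 - lam) * √A - mu) ^ 2, ((1 + lam) * √B + mu) ^ 2, by positivity, by positivity,
    fun x => ?_⟩
  have hx := norm_nonneg x
  have hSf : 0 ≤ ∑' i, ‖⟪x, f i⟫_ℂ‖ ^ 2 := tsum_nonneg fun i => sq_nonneg _
  have hSg : 0 ≤ ∑' i, ‖⟪x, g i⟫_ℂ‖ ^ 2 := tsum_nonneg fun i => sq_nonneg _
  obtain ⟨hdiff_sum, hdiff⟩ := summable_and_sqrt_tsum_le_of_rpow_half_le
    (fun i => sq_nonneg _) (by positivity) (hper x)
  simp only [inner_sub_right] at hdiff_sum hdiff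
  obtain ⟨hlo, hhi⟩ := sqrt_tsum_sq_bounds_of_sqrt_tsum_sub_le (v := fun i => ⟪x, g i⟫_ℂ)
    (summable_inner_sq_of_mul_norm_sq_le hA (hframe x).1) hdiff_sum
    ((Real.sqrt_mul_le_sqrt_iff hA.le hx hSf).2 (hframe x).1)
    ((Real.sqrt_le_sqrt_mul_iff hB.le hx).2 (hframe x).2) hlam hlam₁ hdiff
  constructor
  · rw [← Real.sqrt_mul_le_sqrt_iff (sq_nonneg _) hx hSg, Real.sqrt_sq hC.le]
    linarith
  · rw [← Real.sqrt_le_sqrt_mul_iff (sq_nonneg _) hx, Real.sqrt_sq (by positivity)]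
    linarith

/-- Casazza–Christensen perturbation theorem: if `(fᵢ)` is a frame with bounds
`A, B`, and `λ₁ + μ/√A < 1` with
`(∑ᵢ |⟨x, fᵢ - gᵢ⟩|²)^{1/2} ≤ λ₁ (∑ᵢ |⟨x, fᵢ⟩|²)^{1/2} + μ‖x‖` for all `x`
(the left-hand sum taken in `[0,∞]`), then `(gᵢ)` is also a frame for `H`. -/
theorem perturbation_frame
    {H : Type} [NormedAddCommGroup H] [InnerProductSpace ℂ H] [CompleteSpace H]
    [SecondCountableTopology H] (f g : ℕ → H) (A B : ℝ) (hA : 0 < A) (hB : 0 < B)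
    (hframe : ∀ x : H,
      A * ‖x‖ ^ 2 ≤ ∑' i, ‖(inner ℂ x (f i) : ℂ)‖ ^ 2 ∧
      ∑' i, ‖(inner ℂ x (f i) : ℂ)‖ ^ 2 ≤ B * ‖x‖ ^ 2)
    (lam mu : ℝ) (hlam : 0 ≤ lam) (hmu : 0 ≤ mu)
    (hsmall : lam + mu / Real.sqrt A < 1)
    (hper : ∀ x : H,
      (∑' i, ENNReal.ofReal (‖(inner ℂ x (f i - g i) : ℂ)‖ ^ 2)) ^ ((1 : ℝ) / 2) ≤
        ENNReal.ofReal
          (lam * Real.sqrt (∑' i, ‖(inner ℂ x (f i) : ℂ)‖ ^ 2) + mu * ‖x‖)) :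
    ∃ A' B' : ℝ, 0 < A' ∧ 0 < B' ∧ ∀ x : H,
      A' * ‖x‖ ^ 2 ≤ ∑' i, ‖(inner ℂ x (g i) : ℂ)‖ ^ 2 ∧
      ∑' i, ‖(inner ℂ x (g i) : ℂ)‖ ^ 2 ≤ B' * ‖x‖ ^ 2 :=
  perturbation_frame_general f g A B hA hB hframe lam mu hlam hmu hsmall hper
end

section
/- Let g ∈ L²(ℝ) and a, b > 0, and suppose the Weyl–Heisenberg system (E_{mb}T_{na}g)_{m,n∈ℤ} is a frame for L²(ℝ) with frame bounds A, B > 0. Then for almost every t ∈ ℝ, A·b ≤ ∑_{n∈ℤ} |g(t − na)|² ≤ B·b. -/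
/-!
Test the frame inequality on `f = 𝟙_E` for measurable `E` inside a window `(c, c + 1/b]`.
For fixed `n`, `⟪𝟙_E, E_{mb} T_{na} g⟫` is `1/b` times the `(-m)`-th Fourier coefficient of
`𝟙_E · g(· - na)` on that window, so Parseval gives
`∑ₘ |⟪𝟙_E, E_{mb} T_{na} g⟫|² = b⁻¹ ∫_E |g(x - na)|²`. Summing over `n`,
`A |E| ≤ b⁻¹ ∫_E G ≤ B |E|` with `G t = ∑ₙ |g(t - na)|²`; as `E` is arbitrary and the windows
cover `ℝ`, `A b ≤ G ≤ B b` almost everywhere.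
-/

open MeasureTheory Complex Set
open scoped ENNReal Real InnerProductSpace

theorem ENNReal.ofReal_norm_sq {E : Type*} [SeminormedAddCommGroup E] (x : E) :
    ENNReal.ofReal (‖x‖ ^ 2) = ‖x‖ₑ ^ 2 := by
  rw [ENNReal.ofReal_pow (norm_nonneg _), ofReal_norm]

def HasFrameBounds {𝕜 H ι : Type*} [RCLike 𝕜] [NormedAddCommGroup H] [InnerProductSpace 𝕜 H]
    (v : ι → H) (A B : ℝ) : Prop :=
  ∀ f : H, A * ‖f‖ ^ 2 ≤ ∑' i, ‖⟪f, v i⟫_𝕜‖ ^ 2 ∧ ∑' i, ‖⟪f, v i⟫_𝕜‖ ^ 2 ≤ B * ‖f‖ ^ 2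

theorem HasFrameBounds.enorm_sq_bounds {𝕜 H ι : Type*} [RCLike 𝕜] [NormedAddCommGroup H]
    [InnerProductSpace 𝕜 H] {v : ι → H} {A B : ℝ} (hv : HasFrameBounds (𝕜 := 𝕜) v A B)
    (hA : 0 < A) (f : H) :
    ENNReal.ofReal A * ‖f‖ₑ ^ 2 ≤ ∑' i, ‖⟪f, v i⟫_𝕜‖ₑ ^ 2 ∧
      ∑' i, ‖⟪f, v i⟫_𝕜‖ₑ ^ 2 ≤ ENNReal.ofReal B * ‖f‖ₑ ^ 2 := by
  rcases eq_or_ne f 0 with rfl | hf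
  · simp
  obtain ⟨hlow, hup⟩ := hv f
  have hsum : Summable fun i => ‖⟪f, v i⟫_𝕜‖ ^ 2 := by
    -- a non-summable `tsum` is `0`, which the lower frame bound excludes
    by_contra hns
    rw [tsum_eq_zero_of_not_summable hns] at hlow
    have : 0 < A * ‖f‖ ^ 2 := by positivity
    linarith
  simp_rw [← ENNReal.ofReal_norm_sq, ← ENNReal.ofReal_tsum_of_nonneg (fun _ => sq_nonneg _) hsum,
    ← ENNReal.ofReal_mul hA.le, ← ENNReal.ofReal_mul' (sq_nonneg _)]
  exact ⟨ENNReal.ofReal_le_ofReal hlow, ENNReal.ofReal_le_ofReal hup⟩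

theorem ae_le_of_forall_setLIntegral_le_of_iUnion_eq_univ {α ι : Type*} [MeasurableSpace α]
    [Countable ι] {μ : Measure α} [SigmaFinite μ] {f g : α → ℝ≥0∞} (hf : Measurable f)
    {s : ι → Set α} (hs : ∀ i, MeasurableSet (s i)) (hcover : ⋃ i, s i = univ)
    (h : ∀ i E, MeasurableSet E → E ⊆ s i → ∫⁻ x in E, f x ∂μ ≤ ∫⁻ x in E, g x ∂μ) :
    f ≤ᵐ[μ] g := by
  rw [Filter.EventuallyLE, ← Measure.restrict_univ (μ := μ), ← hcover, ae_restrict_iUnion_iff]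
  refine fun i => ae_le_of_forall_setLIntegral_le_of_sigmaFinite hf fun E hE _ => ?_
  simp only [Measure.restrict_restrict hE]
  exact h i _ (hE.inter (hs i)) inter_subset_right

theorem ae_le_of_forall_setLIntegral_le_of_subset_Ioc {T : ℝ} (hT : 0 < T) {f g : ℝ → ℝ≥0∞}
    (hf : Measurable f)
    (h : ∀ c E, MeasurableSet E → E ⊆ Ioc c (c + T) → ∫⁻ x in E, f x ≤ ∫⁻ x in E, g x) :
    f ≤ᵐ[volume] g := by
  refine ae_le_of_forall_setLIntegral_le_of_iUnion_eq_univ hf (fun _ => measurableSet_Ioc)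
    (iUnion_Ioc_zsmul hT) fun k E hE hEk => h (k • T) E hE ?_
  rwa [← add_one_zsmul]

theorem tsum_enorm_fourierCoeffOn_sq {c d : ℝ} (hcd : c < d) {φ : ℝ → ℂ}
    (hφ : MemLp φ 2 (volume.restrict (Ioc c d))) :
    ∑' n : ℤ, ‖fourierCoeffOn hcd φ n‖ₑ ^ 2 =
      ENNReal.ofReal (d - c)⁻¹ * ∫⁻ x in Ioc c d, ‖φ x‖ₑ ^ 2 := by
  have hsum := hasSum_sq_fourierCoeffOn hcd hφ
  rw [intervalIntegral.integral_of_le hcd.le, smul_eq_mul] at hsum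
  have h := ENNReal.ofReal_tsum_of_nonneg (fun n => sq_nonneg _) hsum.summable
  rw [hsum.tsum_eq, ENNReal.ofReal_mul (inv_nonneg.2 (sub_nonneg.2 hcd.le)),
    ofReal_integral_eq_lintegral_ofReal (hφ.integrable_norm_pow two_ne_zero)
      (ae_of_all _ fun _ => sq_nonneg _)] at h
  simp_rw [ENNReal.ofReal_norm_sq] at h
  exact h.symm

theorem setIntegral_exp_mul_eq_fourierCoeffOn {b : ℝ} (hb : 0 < b) (c : ℝ) (φ : ℝ → ℂ) (m : ℤ) :
    ∫ x in Ioc c (c + b⁻¹), exp (2 * π * I * m * b * x) * φ x =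
      b⁻¹ * fourierCoeffOn (lt_add_of_pos_right c (inv_pos.2 hb)) φ (-m) := by
  rw [fourierCoeffOn_eq_integral, intervalIntegral.integral_of_le (by simp [hb.le]),
    add_sub_cancel_left, neg_neg, one_div, inv_inv, Complex.real_smul, ← mul_assoc]
  push_cast
  rw [inv_mul_cancel₀ (by exact_mod_cast hb.ne'), one_mul]
  refine setIntegral_congr_fun measurableSet_Ioc fun x _ => ?_
  rw [fourier_coe_apply, smul_eq_mul]
  push_cast
  rw [div_inv_eq_mul]
  congr 2
  ring

def IsGaborSystem (g : Lp ℂ 2 (volume : Measure ℝ)) (a b : ℝ)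
    (gab : ℤ → ℤ → Lp ℂ 2 (volume : Measure ℝ)) : Prop :=
  ∀ m n : ℤ, ∀ᵐ x : ℝ, gab m n x = exp (2 * π * I * m * b * x) * g (x - n * a)

namespace IsGaborSystem

variable {g : Lp ℂ 2 (volume : Measure ℝ)} {a b : ℝ} {gab : ℤ → ℤ → Lp ℂ 2 (volume : Measure ℝ)}
  {c : ℝ} {E : Set ℝ}

theorem inner_indicatorConstLp_one (hgab : IsGaborSystem g a b gab) (hb : 0 < b)
    (hE : MeasurableSet E) (hμE : volume E ≠ ∞) (hEc : E ⊆ Ioc c (c + b⁻¹)) (m n : ℤ) :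
    ⟪indicatorConstLp 2 hE hμE (1 : ℂ), gab m n⟫_ℂ =
      b⁻¹ * fourierCoeffOn (lt_add_of_pos_right c (inv_pos.2 hb))
        (E.indicator fun x => g (x - n * a)) (-m) := by
  rw [L2.inner_indicatorConstLp_one, ← setIntegral_exp_mul_eq_fourierCoeffOn hb,
    setIntegral_congr_ae hE ((hgab m n).mono fun x hx _ => hx)]
  simp_rw [← indicator_mul_right E fun x : ℝ => exp (2 * π * I * m * b * x)]
  rw [setIntegral_indicator hE, inter_eq_right.2 hEc]

theorem tsum_enorm_inner_indicatorConstLp_one_sq (hgab : IsGaborSystem g a b gab) (hb : 0 < b)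
    (hE : MeasurableSet E) (hμE : volume E ≠ ∞) (hEc : E ⊆ Ioc c (c + b⁻¹)) (n : ℤ) :
    ∑' m : ℤ, ‖⟪indicatorConstLp 2 hE hμE (1 : ℂ), gab m n⟫_ℂ‖ₑ ^ 2 =
      ENNReal.ofReal b⁻¹ * ∫⁻ x in E, ‖g (x - n * a)‖ₑ ^ 2 := by
  have hmem : MemLp (E.indicator fun x => g (x - n * a)) 2 (volume.restrict (Ioc c (c + b⁻¹))) :=
    (((Lp.memLp g).comp_measurePreserving (measurePreserving_sub_right volume _)).indicator
      hE).restrict _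
  simp_rw [hgab.inner_indicatorConstLp_one hb hE hμE hEc, enorm_mul, mul_pow,
    ENNReal.tsum_mul_left]
  rw [tsum_comp_neg fun m => ‖fourierCoeffOn _ (E.indicator fun x => g (x - n * a)) m‖ₑ ^ 2,
    tsum_enorm_fourierCoeffOn_sq _ hmem, add_sub_cancel_left, inv_inv]
  have hset : ∫⁻ x in Ioc c (c + b⁻¹), ‖E.indicator (fun x => g (x - n * a)) x‖ₑ ^ 2 =
      ∫⁻ x in E, ‖g (x - n * a)‖ₑ ^ 2 := by
    have hpt : ∀ x, ‖E.indicator (fun x => g (x - n * a)) x‖ₑ ^ 2 =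
        E.indicator (fun x => ‖g (x - n * a)‖ₑ ^ 2) x := fun x => by
      by_cases hx : x ∈ E <;> simp [hx]
    simp_rw [hpt]
    rw [lintegral_indicator hE, Measure.restrict_restrict hE, inter_eq_left.2 hEc]
  have hbnorm : ‖((b⁻¹ : ℝ) : ℂ)‖ₑ = ENNReal.ofReal b⁻¹ := by
    rw [← ofReal_norm, norm_real, Real.norm_of_nonneg (inv_nonneg.2 hb.le)]
  rw [hset, hbnorm, ENNReal.ofReal_inv_of_pos hb, sq,
    mul_assoc, ← mul_assoc _ (ENNReal.ofReal b),
    ENNReal.inv_mul_cancel (by simpa using hb) ENNReal.ofReal_ne_top, one_mul]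

theorem tsum_prod_enorm_inner_indicatorConstLp_one_sq (hgab : IsGaborSystem g a b gab)
    (hb : 0 < b) (hE : MeasurableSet E) (hμE : volume E ≠ ∞) (hEc : E ⊆ Ioc c (c + b⁻¹)) :
    ∑' p : ℤ × ℤ, ‖⟪indicatorConstLp 2 hE hμE (1 : ℂ), gab p.1 p.2⟫_ℂ‖ₑ ^ 2 =
      ENNReal.ofReal b⁻¹ * ∫⁻ x in E, ∑' n : ℤ, ‖g (x - n * a)‖ₑ ^ 2 := by
  rw [ENNReal.tsum_prod', ENNReal.tsum_comm]
  simp_rw [hgab.tsum_enorm_inner_indicatorConstLp_one_sq hb hE hμE hEc, ENNReal.tsum_mul_left]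
  rw [lintegral_tsum fun n => by fun_prop]

theorem setLIntegral_tsum_enorm_sq_bounds (hgab : IsGaborSystem g a b gab) {A B : ℝ}
    (hframe : HasFrameBounds (𝕜 := ℂ) (fun p : ℤ × ℤ => gab p.1 p.2) A B) (hA : 0 < A)
    (hb : 0 < b) (hE : MeasurableSet E) (hEc : E ⊆ Ioc c (c + b⁻¹)) :
    ∫⁻ _ in E, ENNReal.ofReal (A * b) ≤ ∫⁻ x in E, ∑' n : ℤ, ‖g (x - n * a)‖ₑ ^ 2 ∧
      ∫⁻ x in E, ∑' n : ℤ, ‖g (x - n * a)‖ₑ ^ 2 ≤ ∫⁻ _ in E, ENNReal.ofReal (B * b) := by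
  have hμE : volume E ≠ ∞ := (measure_mono hEc).trans_lt measure_Ioc_lt_top |>.ne
  have hnorm : ‖indicatorConstLp 2 hE hμE (1 : ℂ)‖ₑ ^ 2 = volume E := by
    rw [← ENNReal.ofReal_norm_sq, norm_indicatorConstLp two_ne_zero ENNReal.ofNat_ne_top, norm_one,
      one_mul, ENNReal.toReal_ofNat, ← Real.sqrt_eq_rpow, Real.sq_sqrt measureReal_nonneg,
      measureReal_def, ENNReal.ofReal_toReal hμE]
  have hbb : ENNReal.ofReal b * ENNReal.ofReal b⁻¹ = 1 := by
    rw [← ENNReal.ofReal_mul hb.le, mul_inv_cancel₀ hb.ne', ENNReal.ofReal_one]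
  obtain ⟨hlow, hup⟩ := hframe.enorm_sq_bounds hA (indicatorConstLp 2 hE hμE (1 : ℂ))
  rw [hnorm, hgab.tsum_prod_enorm_inner_indicatorConstLp_one_sq hb hE hμE hEc] at hlow hup
  rw [setLIntegral_const, setLIntegral_const, ENNReal.ofReal_mul' hb.le,
    ENNReal.ofReal_mul' hb.le, mul_right_comm, mul_right_comm (ENNReal.ofReal B)]
  constructor
  · calc ENNReal.ofReal A * volume E * ENNReal.ofReal b
        ≤ ENNReal.ofReal b⁻¹ * (∫⁻ x in E, ∑' n : ℤ, ‖g (x - n * a)‖ₑ ^ 2) * ENNReal.ofReal b :=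
          mul_le_mul_left hlow _
      _ = _ := by rw [mul_comm, ← mul_assoc, hbb, one_mul]
  · calc ∫⁻ x in E, ∑' n : ℤ, ‖g (x - n * a)‖ₑ ^ 2
        = ENNReal.ofReal b⁻¹ * (∫⁻ x in E, ∑' n : ℤ, ‖g (x - n * a)‖ₑ ^ 2) * ENNReal.ofReal b := by
          rw [mul_comm, ← mul_assoc, hbb, one_mul]
      _ ≤ _ := mul_le_mul_left hup _

end IsGaborSystem

theorem wh_frame_necessary_condition_general
    (g : Lp ℂ 2 (volume : Measure ℝ)) (a b : ℝ) (hb : 0 < b)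
    (gab : ℤ → ℤ → Lp ℂ 2 (volume : Measure ℝ))
    (hgab : ∀ m n : ℤ, ∀ᵐ x : ℝ,
      gab m n x = Complex.exp (2 * Real.pi * Complex.I * (m : ℂ) * (b : ℂ) * (x : ℂ)) *
        g (x - n * a))
    (A B : ℝ) (hA : 0 < A) (hB : 0 < B)
    (hframe : ∀ f : Lp ℂ 2 (volume : Measure ℝ),
      A * ‖f‖ ^ 2 ≤ ∑' p : ℤ × ℤ, ‖(inner ℂ f (gab p.1 p.2) : ℂ)‖ ^ 2 ∧
      ∑' p : ℤ × ℤ, ‖(inner ℂ f (gab p.1 p.2) : ℂ)‖ ^ 2 ≤ B * ‖f‖ ^ 2) :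
    ∀ᵐ t : ℝ,
      A * b ≤ ∑' n : ℤ, ‖g (t - n * a)‖ ^ 2 ∧
      ∑' n : ℤ, ‖g (t - n * a)‖ ^ 2 ≤ B * b := by
  have hlow : ∀ᵐ t, ENNReal.ofReal (A * b) ≤ ∑' n : ℤ, ‖g (t - n * a)‖ₑ ^ 2 :=
    ae_le_of_forall_setLIntegral_le_of_subset_Ioc (inv_pos.2 hb) measurable_const
      fun _ _ hE hEc =>
        (IsGaborSystem.setLIntegral_tsum_enorm_sq_bounds hgab hframe hA hb hE hEc).1
  have hup : ∀ᵐ t, ∑' n : ℤ, ‖g (t - n * a)‖ₑ ^ 2 ≤ ENNReal.ofReal (B * b) :=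
    ae_le_of_forall_setLIntegral_le_of_subset_Ioc (inv_pos.2 hb) (by fun_prop)
      fun _ _ hE hEc =>
        (IsGaborSystem.setLIntegral_tsum_enorm_sq_bounds hgab hframe hA hb hE hEc).2
  filter_upwards [hlow, hup] with t hlow hup
  have hfin : ∑' n : ℤ, ‖g (t - n * a)‖ₑ ^ 2 ≠ ∞ := ne_top_of_le_ne_top ENNReal.ofReal_ne_top hup
  have htoReal : (∑' n : ℤ, ‖g (t - n * a)‖ₑ ^ 2).toReal = ∑' n : ℤ, ‖g (t - n * a)‖ ^ 2 := by
    rw [ENNReal.tsum_toReal_eq fun n => by simp]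
    simp [toReal_enorm]
  rw [← htoReal]
  exact ⟨(ENNReal.ofReal_le_iff_le_toReal hfin).1 hlow,
    ENNReal.toReal_le_of_le_ofReal (by positivity) hup⟩

/-- Necessary condition for a Weyl–Heisenberg frame: if the Gabor system
`(E_{mb}T_{na}g)_{m,n ∈ ℤ}` is a frame for `L²(ℝ)` with frame bounds `A, B`,
then `A·b ≤ ∑ₙ |g(t - na)|² ≤ B·b` for almost every `t`. -/
theorem wh_frame_necessary_condition
    (g : Lp ℂ 2 (volume : Measure ℝ)) (a b : ℝ) (ha : 0 < a) (hb : 0 < b)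
    (gab : ℤ → ℤ → Lp ℂ 2 (volume : Measure ℝ))
    (hgab : ∀ m n : ℤ, ∀ᵐ x : ℝ,
      gab m n x = Complex.exp (2 * Real.pi * Complex.I * (m : ℂ) * (b : ℂ) * (x : ℂ)) *
        g (x - n * a))
    (A B : ℝ) (hA : 0 < A) (hB : 0 < B)
    (hframe : ∀ f : Lp ℂ 2 (volume : Measure ℝ),
      A * ‖f‖ ^ 2 ≤ ∑' p : ℤ × ℤ, ‖(inner ℂ f (gab p.1 p.2) : ℂ)‖ ^ 2 ∧
      ∑' p : ℤ × ℤ, ‖(inner ℂ f (gab p.1 p.2) : ℂ)‖ ^ 2 ≤ B * ‖f‖ ^ 2) :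
    ∀ᵐ t : ℝ,
      A * b ≤ ∑' n : ℤ, ‖g (t - n * a)‖ ^ 2 ∧
      ∑' n : ℤ, ‖g (t - n * a)‖ ^ 2 ≤ B * b :=
  wh_frame_necessary_condition_general g a b hb gab hgab A B hA hB hframe
end
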